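/- Let Q ∈ ℝ^{d×r} satisfy QᵀQ = I_r and let F ∈ ℝ^{d×t} have full column rank t. Set P := F(FᵀF)⁻¹Fᵀ and η := det(Qᵀ(I_d − P)Q). Then η ∈ [0,1] and ‖FᵀQ‖₂ ≥ σ_min(F) · √(1 − η^{1/r}). -/

import Mathlib

/-!
Let `P` be the orthogonal projection onto the column space of `F` and `M = Qᵀ(I - P)Q`. Both `M`
and `QᵀPQ = I - M` are positive semidefinite, so the eigenvalues of `M` lie in `[0, 1]`, hence so
does `η = det M`. The smallest eigenvalue `μ` of `M` satisfies `μ ≤ η^{1/r}`, and a unit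
eigenvector `v` for it has `‖PQv‖² = 1 - μ`. Since `FᵀQv = FᵀPQv` and `Fᵀ` stretches every vector
`Fw` of the column space by at least `σ_min(F)` (the Rayleigh bound `σ_min(F)²‖w‖² ≤ ⟪w, FᵀFw⟫`
together with Cauchy–Schwarz), `‖FᵀQv‖ ≥ σ_min(F) √(1 - μ)`.
-/

open Matrix

/-- The spectral norm (largest singular value) of a real matrix, as the operator norm of the
induced linear map between Euclidean spaces. -/
noncomputable def specNorm {m n : ℕ} (A : Matrix (Fin m) (Fin n) ℝ) : ℝ :=
  ‖LinearMap.toContinuousLinearMap (Matrix.toEuclideanLin A)‖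

/-- The smallest singular value of a real matrix: the square root of the smallest eigenvalue of
`AᵀA` (`= AᴴA` over `ℝ`). -/
noncomputable def sigmaMin {m n : ℕ} (A : Matrix (Fin m) (Fin n) ℝ) : ℝ :=
  Real.sqrt (⨅ i, (Matrix.isHermitian_conjTranspose_mul_self A).eigenvalues i)

open MatrixOrder

namespace Matrix

variable {m n : Type*} [Fintype m] [Fintype n]

theorem isUnit_of_rank_eq_card [DecidableEq n] {K : Type*} [Field K] {A : Matrix n n K}
    (h : A.rank = Fintype.card n) : IsUnit A := by
  rw [← mulVec_surjective_iff_isUnit, ← Matrix.coe_mulVecLin, ← LinearMap.range_eq_top]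
  exact Submodule.eq_top_of_finrank_eq (h.trans (Module.finrank_fintype_fun_eq_card K).symm)

theorem IsHermitian.iInf_eigenvalues_mul_dotProduct_self_le [DecidableEq n] {A : Matrix n n ℝ}
    (hA : A.IsHermitian) (x : n → ℝ) :
    (⨅ i, hA.eigenvalues i) * (x ⬝ᵥ x) ≤ x ⬝ᵥ (A *ᵥ x) := by
  have h : algebraMap ℝ (Matrix n n ℝ) (⨅ i, hA.eigenvalues i) ≤ A := by
    refine algebraMap_le_of_le_spectrum (fun μ hμ => ?_) hA.isSelfAdjoint
    obtain ⟨i, rfl⟩ := hA.spectrum_real_eq_range_eigenvalues ▸ hμ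
    exact ciInf_le (Set.finite_range _).bddBelow i
  simpa [sub_mulVec, dotProduct_sub, Algebra.algebraMap_eq_smul_one, sub_nonneg, smul_mulVec,
    dotProduct_smul] using (Matrix.le_iff.mp h).dotProduct_mulVec_nonneg x

theorem PosSemidef.eigenvalues_le_one [DecidableEq n] {A : Matrix n n ℝ}
    (hA : A.PosSemidef) (h1 : A ≤ 1) (i : n) : hA.1.eigenvalues i ≤ 1 := by
  rw [← map_one (algebraMap ℝ (Matrix n n ℝ)),
    le_algebraMap_iff_spectrum_le hA.1.isSelfAdjoint] at h1
  exact h1 _ (hA.1.eigenvalues_mem_spectrum_real i)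

theorem PosSemidef.det_le_one [DecidableEq n] {A : Matrix n n ℝ} (hA : A.PosSemidef) (h1 : A ≤ 1) :
    A.det ≤ 1 := by
  rw [hA.1.det_eq_prod_eigenvalues]
  exact Finset.prod_le_one (fun i _ => hA.eigenvalues_nonneg i)
    (fun i _ => hA.eigenvalues_le_one h1 i)

theorem PosSemidef.iInf_eigenvalues_le_det_rpow [Nonempty n] [DecidableEq n] {A : Matrix n n ℝ}
    (hA : A.PosSemidef) : ⨅ i, hA.1.eigenvalues i ≤ A.det ^ ((1 : ℝ) / Fintype.card n) := by
  set μ := ⨅ i, hA.1.eigenvalues i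
  have hμ : 0 ≤ μ := le_ciInf hA.eigenvalues_nonneg
  have hpow : μ ^ Fintype.card n ≤ A.det := by
    rw [hA.1.det_eq_prod_eigenvalues, ← Finset.card_univ, ← Finset.prod_const]
    exact Finset.prod_le_prod (fun _ _ => hμ)
      (fun i _ => ciInf_le (Set.finite_range _).bddBelow i)
  calc μ = (μ ^ Fintype.card n) ^ ((1 : ℝ) / Fintype.card n) := by
        rw [one_div, Real.pow_rpow_inv_natCast hμ Fintype.card_ne_zero]
    _ ≤ A.det ^ ((1 : ℝ) / Fintype.card n) := by gcongr

theorem PosSemidef.transpose_mul_mul_same {k : Type*} [Fintype k] {E : Matrix m m ℝ}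
    (hE : E.PosSemidef) (Q : Matrix m k ℝ) : (Qᵀ * E * Q).PosSemidef := by
  simpa only [conjTranspose_eq_transpose_of_trivial] using hE.conjTranspose_mul_mul_same Q

theorem transpose_mul_mul_le_one [DecidableEq m] {k : Type*} [Fintype k] [DecidableEq k]
    {E : Matrix m m ℝ} (hE : E ≤ 1) {Q : Matrix m k ℝ} (hQ : Qᵀ * Q = 1) : Qᵀ * E * Q ≤ 1 := by
  have h := (Matrix.le_iff.mp hE).transpose_mul_mul_same Q
  rwa [Matrix.mul_sub, Matrix.sub_mul, Matrix.mul_one, hQ, ← Matrix.le_iff] at h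

theorem IsStarProjection.mulVec_dotProduct_mulVec_self {P : Matrix m m ℝ}
    (hP : IsStarProjection P) (u : m → ℝ) : (P *ᵥ u) ⬝ᵥ (P *ᵥ u) = u ⬝ᵥ (P *ᵥ u) := by
  have hPt : Pᵀ = P := by
    simpa only [star_eq_conjTranspose, conjTranspose_eq_transpose_of_trivial] using
      hP.isSelfAdjoint.star_eq
  calc (P *ᵥ u) ⬝ᵥ (P *ᵥ u) = u ⬝ᵥ (Pᵀ *ᵥ (P *ᵥ u)) := by
        rw [dotProduct_mulVec u, vecMul_transpose]
    _ = u ⬝ᵥ (P *ᵥ u) := by rw [mulVec_mulVec, hPt, hP.isIdempotentElem.eq]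

theorem dotProduct_sq_le_dotProduct_self_mul {R : Type*} [CommRing R] [LinearOrder R]
    [IsStrictOrderedRing R] (x y : n → R) : (x ⬝ᵥ y) ^ 2 ≤ (x ⬝ᵥ x) * (y ⬝ᵥ y) := by
  simpa [dotProduct, sq] using Finset.sum_mul_sq_le_sq_mul_sq Finset.univ x y

theorem iInf_eigenvalues_mul_dotProduct_le_transpose_mulVec [DecidableEq n] (F : Matrix m n ℝ)
    (w : n → ℝ) :
    (⨅ i, (isHermitian_conjTranspose_mul_self F).eigenvalues i) * ((F *ᵥ w) ⬝ᵥ (F *ᵥ w)) ≤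
      (Fᵀ *ᵥ (F *ᵥ w)) ⬝ᵥ (Fᵀ *ᵥ (F *ᵥ w)) := by
  set μ := ⨅ i, (isHermitian_conjTranspose_mul_self F).eigenvalues i
  set z := Fᵀ *ᵥ (F *ᵥ w)
  have hμ : 0 ≤ μ := Real.iInf_nonneg (eigenvalues_conjTranspose_mul_self_nonneg F)
  have hFw : (F *ᵥ w) ⬝ᵥ (F *ᵥ w) = w ⬝ᵥ z := by
    rw [dotProduct_mulVec, ← mulVec_transpose, dotProduct_comm]
  have hray : μ * (w ⬝ᵥ w) ≤ w ⬝ᵥ z := by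
    calc μ * (w ⬝ᵥ w) ≤ w ⬝ᵥ ((Fᴴ * F) *ᵥ w) :=
          (isHermitian_conjTranspose_mul_self F).iInf_eigenvalues_mul_dotProduct_self_le w
      _ = w ⬝ᵥ z := by rw [conjTranspose_eq_transpose_of_trivial, ← mulVec_mulVec]
  have hcs := dotProduct_sq_le_dotProduct_self_mul w z
  have hwz : 0 ≤ w ⬝ᵥ z := hFw ▸ dotProduct_self_star_nonneg (F *ᵥ w)
  have hz : 0 ≤ z ⬝ᵥ z := dotProduct_self_star_nonneg z
  rw [hFw]
  -- `‖Fw‖² = ⟪w, z⟫ ≤ ‖w‖ ‖z‖` and `μ ‖w‖² ≤ ⟪w, z⟫` give `μ ‖Fw‖⁴ ≤ ‖Fw‖² ‖z‖²`.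
  rcases hwz.eq_or_lt with h0 | hpos
  · rw [← h0, mul_zero]; exact hz
  · nlinarith [mul_le_mul_of_nonneg_right hray (mul_nonneg hμ hz)]

noncomputable def colSpaceProj [DecidableEq n] (F : Matrix m n ℝ) : Matrix m m ℝ :=
  F * (Fᵀ * F)⁻¹ * Fᵀ

variable [DecidableEq n] {F : Matrix m n ℝ}

theorem transpose_mul_colSpaceProj (hF : IsUnit (Fᵀ * F)) : Fᵀ * colSpaceProj F = Fᵀ := by
  rw [colSpaceProj, ← Matrix.mul_assoc, ← Matrix.mul_assoc,
    mul_nonsing_inv _ ((isUnit_iff_isUnit_det _).mp hF), Matrix.one_mul]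

theorem isStarProjection_colSpaceProj (hF : IsUnit (Fᵀ * F)) :
    IsStarProjection (colSpaceProj F) where
  isIdempotentElem := by
    rw [IsIdempotentElem]
    nth_rw 1 [colSpaceProj]
    rw [Matrix.mul_assoc, transpose_mul_colSpaceProj hF, colSpaceProj]
  isSelfAdjoint := by
    rw [IsSelfAdjoint, star_eq_conjTranspose, conjTranspose_eq_transpose_of_trivial, colSpaceProj,
      transpose_mul, transpose_mul, transpose_transpose, transpose_nonsing_inv, transpose_mul,
      transpose_transpose, Matrix.mul_assoc]

theorem iInf_eigenvalues_mul_dotProduct_colSpaceProj_le (hF : IsUnit (Fᵀ * F)) (u : m → ℝ) :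
    (⨅ i, (isHermitian_conjTranspose_mul_self F).eigenvalues i) *
      ((colSpaceProj F *ᵥ u) ⬝ᵥ (colSpaceProj F *ᵥ u)) ≤ (Fᵀ *ᵥ u) ⬝ᵥ (Fᵀ *ᵥ u) := by
  have hPu : colSpaceProj F *ᵥ u = F *ᵥ (((Fᵀ * F)⁻¹ * Fᵀ) *ᵥ u) := by
    rw [colSpaceProj, Matrix.mul_assoc, mulVec_mulVec]
  have hFtPu : Fᵀ *ᵥ (colSpaceProj F *ᵥ u) = Fᵀ *ᵥ u := by
    rw [mulVec_mulVec, transpose_mul_colSpaceProj hF]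
  simpa only [← hPu, hFtPu] using
    iInf_eigenvalues_mul_dotProduct_le_transpose_mulVec F (((Fᵀ * F)⁻¹ * Fᵀ) *ᵥ u)

end Matrix

theorem EuclideanSpace.real_norm_sq_eq_dotProduct {n : Type*} [Fintype n]
    (x : EuclideanSpace ℝ n) : ‖x‖ ^ 2 = x.ofLp ⬝ᵥ x.ofLp := by
  rw [← real_inner_self_eq_norm_sq, EuclideanSpace.inner_eq_star_dotProduct, star_trivial]

theorem dotProduct_mulVec_self_le_specNorm_sq {m n : ℕ} (A : Matrix (Fin m) (Fin n) ℝ)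
    (x : Fin n → ℝ) : (A *ᵥ x) ⬝ᵥ (A *ᵥ x) ≤ specNorm A ^ 2 * (x ⬝ᵥ x) := by
  have h := (LinearMap.toContinuousLinearMap (toEuclideanLin A)).le_opNorm (WithLp.toLp 2 x)
  rw [← WithLp.ofLp_toLp 2 x, ← EuclideanSpace.real_norm_sq_eq_dotProduct,
    ← EuclideanSpace.real_norm_sq_eq_dotProduct, ← mul_pow]
  exact pow_le_pow_left₀ (norm_nonneg _) h 2

theorem sq_sigmaMin {m n : ℕ} (A : Matrix (Fin m) (Fin n) ℝ) :
    sigmaMin A ^ 2 = ⨅ i, (isHermitian_conjTranspose_mul_self A).eigenvalues i :=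
  Real.sq_sqrt (Real.iInf_nonneg (eigenvalues_conjTranspose_mul_self_nonneg A))

theorem sigmaMin_mul_sqrt_one_sub_le_specNorm {d r t : ℕ} {Q : Matrix (Fin d) (Fin r) ℝ}
    {F : Matrix (Fin d) (Fin t) ℝ} (hQ : Qᵀ * Q = 1) (hF : IsUnit (Fᵀ * F)) {μ : ℝ}
    {v : Fin r → ℝ} (hv : v ⬝ᵥ v = 1) (hMv : (Qᵀ * (1 - colSpaceProj F) * Q) *ᵥ v = μ • v) :
    sigmaMin F * √(1 - μ) ≤ specNorm (Fᵀ * Q) := by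
  have hPQv : (colSpaceProj F *ᵥ (Q *ᵥ v)) ⬝ᵥ (colSpaceProj F *ᵥ (Q *ᵥ v)) = 1 - μ := by
    have hQPQ : Qᵀ * colSpaceProj F * Q = 1 - Qᵀ * (1 - colSpaceProj F) * Q := by
      rw [Matrix.mul_sub, Matrix.sub_mul, Matrix.mul_one, hQ, sub_sub_cancel]
    calc (colSpaceProj F *ᵥ (Q *ᵥ v)) ⬝ᵥ (colSpaceProj F *ᵥ (Q *ᵥ v))
        = v ⬝ᵥ (Qᵀ *ᵥ (colSpaceProj F *ᵥ (Q *ᵥ v))) := by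
          rw [(isStarProjection_colSpaceProj hF).mulVec_dotProduct_mulVec_self, dotProduct_mulVec v,
            vecMul_transpose]
      _ = v ⬝ᵥ (v - μ • v) := by
          rw [mulVec_mulVec, mulVec_mulVec, hQPQ, sub_mulVec, one_mulVec, hMv]
      _ = 1 - μ := by rw [dotProduct_sub, dotProduct_smul, smul_eq_mul, hv, mul_one]
  have hsq : sigmaMin F ^ 2 * (1 - μ) ≤ specNorm (Fᵀ * Q) ^ 2 :=
    calc sigmaMin F ^ 2 * (1 - μ)
        ≤ (Fᵀ *ᵥ (Q *ᵥ v)) ⬝ᵥ (Fᵀ *ᵥ (Q *ᵥ v)) := by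
          rw [sq_sigmaMin, ← hPQv]
          exact iInf_eigenvalues_mul_dotProduct_colSpaceProj_le hF _
      _ ≤ specNorm (Fᵀ * Q) ^ 2 := by
          simpa only [mulVec_mulVec, hv, mul_one] using
            dotProduct_mulVec_self_le_specNorm_sq (Fᵀ * Q) v
  rw [← Real.sqrt_sq (show 0 ≤ sigmaMin F from Real.sqrt_nonneg _), ← Real.sqrt_mul (sq_nonneg _)]
  exact Real.sqrt_le_iff.mpr ⟨norm_nonneg _, hsq⟩

/-- Let `Q ∈ ℝ^{d×r}` with `QᵀQ = I_r` and let `F ∈ ℝ^{d×t}` have full column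
rank.  With `P = F(FᵀF)⁻¹Fᵀ` and `η = det(Qᵀ(I − P)Q)`, we have `η ∈ [0,1]` and
`‖FᵀQ‖₂ ≥ σ_min(F) · √(1 − η^{1/r})`. -/
theorem specNorm_transpose_mul_ge_of_orthonormal
    {d r t : ℕ} (Q : Matrix (Fin d) (Fin r) ℝ) (F : Matrix (Fin d) (Fin t) ℝ)
    (hQ : Qᵀ * Q = 1) (hF : F.rank = t) :
    0 ≤ (Qᵀ * ((1 : Matrix (Fin d) (Fin d) ℝ) - F * (Fᵀ * F)⁻¹ * Fᵀ) * Q).det ∧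
    (Qᵀ * ((1 : Matrix (Fin d) (Fin d) ℝ) - F * (Fᵀ * F)⁻¹ * Fᵀ) * Q).det ≤ 1 ∧
    sigmaMin F *
      Real.sqrt (1 -
        (Qᵀ * ((1 : Matrix (Fin d) (Fin d) ℝ) - F * (Fᵀ * F)⁻¹ * Fᵀ) * Q).det ^ ((1 : ℝ) / r)) ≤
      specNorm (Fᵀ * Q) := by
  have hG : IsUnit (Fᵀ * F) :=
    isUnit_of_rank_eq_card (by rw [rank_transpose_mul_self, hF, Fintype.card_fin])
  have hP := isStarProjection_colSpaceProj hG
  set M := Qᵀ * ((1 : Matrix (Fin d) (Fin d) ℝ) - F * (Fᵀ * F)⁻¹ * Fᵀ) * Q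
  have hM0 : M.PosSemidef := (nonneg_iff_posSemidef.mp hP.one_sub_nonneg).transpose_mul_mul_same Q
  have hM1 : M ≤ 1 := transpose_mul_mul_le_one (sub_le_self 1 hP.nonneg) hQ
  refine ⟨hM0.det_nonneg, hM0.det_le_one hM1, ?_⟩
  rcases isEmpty_or_nonempty (Fin r) with hr | hr
  · rw [det_isEmpty, Real.one_rpow, sub_self, Real.sqrt_zero, mul_zero]
    exact norm_nonneg _
  obtain ⟨i, hi⟩ := exists_eq_ciInf_of_finite (f := hM0.1.eigenvalues)
  have hμ : hM0.1.eigenvalues i ≤ M.det ^ ((1 : ℝ) / r) := by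
    simpa [hi] using hM0.iInf_eigenvalues_le_det_rpow
  have hv : ⇑(hM0.1.eigenvectorBasis i) ⬝ᵥ ⇑(hM0.1.eigenvectorBasis i) = 1 := by
    rw [← EuclideanSpace.real_norm_sq_eq_dotProduct, hM0.1.eigenvectorBasis.orthonormal.1 i,
      one_pow]
  calc sigmaMin F * √(1 - M.det ^ ((1 : ℝ) / r))
      ≤ sigmaMin F * √(1 - hM0.1.eigenvalues i) := by
        gcongr
        exact Real.sqrt_nonneg _
    _ ≤ specNorm (Fᵀ * Q) :=
        sigmaMin_mul_sqrt_one_sub_le_specNorm hQ hG hv (hM0.1.mulVec_eigenvectorBasis i)
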